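/- arXiv:math/0412547 — 3 statements merged into one kernel-verified Lean document; each statement's English description precedes it below -/
import Mathlib

section
/- Let X be a metric space with metric ρ, and let A = {a_n : n < ω} be a countably infinite closed discrete subset of X consisting of non-isolated points. Then there exist pairwise disjoint open neighborhoods U_n of a_n and sequences ⟨b_{n,i} : i < ω⟩ in U_n \ {a_n} such that each sequence ⟨b_{n,i}⟩_i converges to a_n, and for every function f : ω → ω the set {b_{n,f(n)} : n < ω} has no accumulation point in X. -/
open Filter

/-- Let `X` be a metric space and `A = {a n : n < ω}` a countably infinite closed discrete
subset of `X` consisting of non-isolated points. Then there are pairwise disjoint open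
neighborhoods `U n` of `a n` and sequences `b n : ℕ → X` with values in `U n \ {a n}`
converging to `a n` such that for every `f : ℕ → ℕ` the selector set
`{b n (f n) : n < ω}` has no accumulation point in `X`. -/
theorem stmt6 {X : Type*} [MetricSpace X] (a : ℕ → X)
    (hinj : Function.Injective a)
    (hclosed : IsClosed (Set.range a))
    (hdiscrete : ∀ x : X, ¬ AccPt x (𝓟 (Set.range a)))
    (hnoniso : ∀ n, AccPt (a n) (𝓟 Set.univ)) :
    ∃ (U : ℕ → Set X) (b : ℕ → ℕ → X),
      (∀ n, IsOpen (U n)) ∧ (∀ n, a n ∈ U n) ∧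
      (∀ n m, n ≠ m → Disjoint (U n) (U m)) ∧
      (∀ n i, b n i ∈ U n \ {a n}) ∧
      (∀ n, Filter.Tendsto (b n) Filter.atTop (nhds (a n))) ∧
      (∀ f : ℕ → ℕ, ∀ x : X, ¬ AccPt x (𝓟 {y | ∃ n, y = b n (f n)})) := by
  -- separation radii
  have hε : ∀ n : ℕ, ∃ ε : ℝ, 0 < ε ∧ ∀ m, m ≠ n → ε ≤ dist (a n) (a m) := by
    intro n
    have h := hdiscrete (a n)
    rw [accPt_iff_nhds] at h
    push_neg at h
    obtain ⟨V, hV, hV2⟩ := h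
    obtain ⟨ε, hεpos, hball⟩ := Metric.mem_nhds_iff.mp hV
    refine ⟨ε, hεpos, fun m hmn => ?_⟩
    by_contra hlt
    push_neg at hlt
    have ham : a m ∈ V := hball (by rwa [Metric.mem_ball, dist_comm])
    exact hmn (hinj (hV2 (a m) ⟨ham, ⟨m, rfl⟩⟩))
  choose ε hεpos hεsep using hε
  set r : ℕ → ℝ := fun n => ε n / 3 with hr
  have hrpos : ∀ n, 0 < r n := fun n => by have := hεpos n; positivity
  -- choose the b's
  have hb : ∀ n i : ℕ, ∃ y : X, y ≠ a n ∧ dist y (a n) < r n / (i + 1) := by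
    intro n i
    have hpos : (0:ℝ) < r n / (i + 1) := by
      have := hrpos n; positivity
    obtain ⟨y, ⟨hy1, _⟩, hy2⟩ := accPt_iff_nhds.mp (hnoniso n)
      (Metric.ball (a n) (r n / (i + 1))) (Metric.ball_mem_nhds _ hpos)
    exact ⟨y, hy2, by simpa [Metric.mem_ball] using hy1⟩
  choose b hbne hbd using hb
  have hbd' : ∀ n i, dist (b n i) (a n) < r n := by
    intro n i
    refine lt_of_lt_of_le (hbd n i) ?_
    rw [div_le_iff₀ (by positivity)]
    nlinarith [hrpos n, (Nat.cast_nonneg i : (0:ℝ) ≤ i)]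
  have hrle : ∀ n m, n ≠ m → r n ≤ dist (a n) (a m) / 3 := by
    intro n m hnm
    have := hεsep n m (Ne.symm hnm)
    rw [hr]
    dsimp only
    rw [dist_comm (a n) (a m)] at *
    linarith [hεsep n m (Ne.symm hnm)]
  refine ⟨fun n => Metric.ball (a n) (r n), b, fun n => Metric.isOpen_ball,
    fun n => Metric.mem_ball_self (hrpos n), ?_, ?_, ?_, ?_⟩
  · -- disjointness
    intro n m hnm
    rw [Set.disjoint_left]
    intro y hyn hym
    rw [Metric.mem_ball] at hyn hym
    have hd : 0 < dist (a n) (a m) := dist_pos.mpr (fun h => hnm (hinj h))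
    have h1 : r n ≤ dist (a n) (a m) / 3 := hrle n m hnm
    have h2 : r m ≤ dist (a m) (a n) / 3 := hrle m n (Ne.symm hnm)
    rw [dist_comm (a m) (a n)] at h2
    have := dist_triangle (a n) y (a m)
    rw [dist_comm (a n) y] at this
    linarith
  · -- membership
    intro n i
    exact ⟨by rw [Metric.mem_ball]; exact hbd' n i, hbne n i⟩
  · -- convergence
    intro n
    rw [tendsto_iff_dist_tendsto_zero]
    apply squeeze_zero (fun i => dist_nonneg) (fun i => (hbd n i).le)
    have : Filter.Tendsto (fun i : ℕ => r n * (1 / (i + 1))) atTop (nhds (r n * 0)) :=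
      Filter.Tendsto.const_mul _ tendsto_one_div_add_atTop_nhds_zero_nat
    simpa [mul_one_div, div_eq_mul_inv] using this
  · -- no accumulation points of selectors
    intro f x hx
    apply hdiscrete x
    rw [accPt_iff_nhds]
    intro V hV
    obtain ⟨δ', hδ'pos, hball⟩ := Metric.mem_nhds_iff.mp hV
    set δ : ℝ := δ' / 3 with hδ
    have hδpos : 0 < δ := by positivity
    rw [accPt_iff_frequently] at hx
    -- first point
    obtain ⟨y1, ⟨hy1x, n1, hy1⟩, hy1b⟩ :=
      (hx.and_eventually (Metric.ball_mem_nhds x hδpos : ∀ᶠ y in nhds x, y ∈ Metric.ball x δ)).exists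
    -- avoid set: y1 together with the (at most one) selector point over x
    set T : Set X := insert y1 {y | ∃ m, a m = x ∧ y = b m (f m)} with hT
    have hTfin : T.Finite := by
      apply Set.Finite.insert
      have : {y | ∃ m, a m = x ∧ y = b m (f m)} = (fun m => b m (f m)) '' {m | a m = x} := by
        ext y; simp [Set.mem_image, eq_comm, and_comm]
      rw [this]
      apply Set.Finite.image
      apply Set.Subsingleton.finite
      intro p hp q hq
      exact hinj (hp.trans hq.symm)
    have hTx : x ∉ T := by
      intro hxT
      rcases hxT with h | ⟨m, hm1, hm2⟩
      · exact hy1x h.symm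
      · exact hbne m (f m) (hm2 ▸ hm1).symm
    have hTc : Tᶜ ∈ nhds x := hTfin.isClosed.isOpen_compl.mem_nhds hTx
    have ev1 : ∀ᶠ y in nhds x, y ∈ Metric.ball x δ := Metric.ball_mem_nhds x hδpos
    have ev2 : ∀ᶠ y in nhds x, y ∉ T := hTc
    obtain ⟨y2, ⟨hy2x, n2, hy2⟩, hy2b, hy2T⟩ :=
      (hx.and_eventually (ev1.and ev2)).exists
    have hn12 : n1 ≠ n2 := by
      rintro rfl
      exact hy2T (Or.inl (hy2.trans hy1.symm))
    have han2 : a n2 ≠ x := by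
      intro h
      exact hy2T (Or.inr ⟨n2, h, hy2⟩)
    -- arithmetic
    have hd : 0 < dist (a n1) (a n2) := dist_pos.mpr (fun h => hn12 (hinj h))
    have h1 : r n1 ≤ dist (a n1) (a n2) / 3 := hrle n1 n2 hn12
    have h2 : r n2 ≤ dist (a n1) (a n2) / 3 := by
      have := hrle n2 n1 (Ne.symm hn12)
      rwa [dist_comm (a n2) (a n1)] at this
    have hb1 : dist y1 (a n1) < r n1 := hy1 ▸ hbd' n1 (f n1)
    have hb2 : dist y2 (a n2) < r n2 := hy2 ▸ hbd' n2 (f n2)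
    have hy1d : dist y1 x < δ := by simpa [Metric.mem_ball] using hy1b
    have hy2d : dist y2 x < δ := by simpa [Metric.mem_ball] using hy2b
    have htri : dist (a n1) (a n2) ≤ dist (a n1) y1 + dist y1 y2 + dist y2 (a n2) :=
      dist_triangle4 _ _ _ _
    have htri2 : dist y1 y2 ≤ dist y1 x + dist x y2 := dist_triangle _ _ _
    rw [dist_comm (a n1) y1] at htri
    rw [dist_comm x y2] at htri2
    have hdsmall : dist (a n1) (a n2) < 6 * δ := by linarith
    have hfin : dist (a n2) x < δ' := by
      have := dist_triangle (a n2) y2 x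
      rw [dist_comm (a n2) y2] at this
      have hδ3 : 3 * δ = δ' := by rw [hδ]; ring
      linarith
    exact ⟨a n2, ⟨hball (by rwa [Metric.mem_ball]), ⟨n2, rfl⟩⟩, han2⟩
end

section
/- Let X be a normal space and ⟨K_n : n < ω⟩ an exhaustion by closed sets with K_n ⊆ int(K_{n+1}) and X = ⋃_n K_n. Then there is a continuous function δ : X → [0,∞) such that for every n, every x ∈ K_{n-1} and every y ∈ X \ K_n satisfy δ(y) − δ(x) ≥ n (with K_{-1} = ∅). -/
/-- Let `X` be a normal space and `⟨K n⟩` an exhaustion by closed sets with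
`K n ⊆ int (K (n+1))` and `X = ⋃ n, K n`. Then there is a continuous
`δ : X → [0, ∞)` such that for every `n`, every `x ∈ K_{n-1}` and `y ∉ K n` satisfy
`δ y - δ x ≥ n` (with `K_{-1} = ∅`; the statement is given in the equivalent shifted
form, the case `n = 0` being vacuous). -/
theorem stmt8 {X : Type*} [TopologicalSpace X] [NormalSpace X]
    (K : ℕ → Set X) (hK : ∀ n, IsClosed (K n))
    (hsub : ∀ n, K n ⊆ interior (K (n + 1)))
    (hcover : (⋃ n, K n) = Set.univ) :
    ∃ δ : X → ℝ, Continuous δ ∧ (∀ x, 0 ≤ δ x) ∧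
      ∀ n : ℕ, ∀ x ∈ K n, ∀ y ∉ K (n + 1), ((n + 1 : ℕ) : ℝ) ≤ δ y - δ x := by
  -- monotonicity of K
  have hmono : Monotone K := monotone_nat_of_le_succ fun n =>
    (hsub n).trans interior_subset
  -- Urysohn functions
  have hury : ∀ n : ℕ, ∃ f : C(X, ℝ), Set.EqOn f 0 (K n) ∧
      Set.EqOn f 1 (interior (K (n + 1)))ᶜ ∧ ∀ x, f x ∈ Set.Icc (0 : ℝ) 1 := by
    intro n
    exact exists_continuous_zero_one_of_isClosed (hK n) isOpen_interior.isClosed_compl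
      (Set.disjoint_compl_right_iff_subset.mpr (hsub n))
  choose f hf0 hf1 hf01 using hury
  set g : ℕ → X → ℝ := fun m x => ((m : ℝ) + 1) * f m x with hg
  have hg_nonneg : ∀ m x, 0 ≤ g m x := fun m x =>
    mul_nonneg (by positivity) (hf01 m x).1
  -- vanishing of tail terms
  have hgzero : ∀ {N : ℕ} {x : X}, x ∈ K N → ∀ m, N ≤ m → g m x = 0 := by
    intro N x hx m hm
    have : x ∈ K m := hmono hm hx
    simp [hg, hf0 m this]
  -- existence of N with x ∈ K N
  have hexists : ∀ x : X, ∃ N, x ∈ K N := by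
    intro x
    have : x ∈ ⋃ n, K n := hcover ▸ Set.mem_univ x
    simpa using this
  have hsummable : ∀ x : X, Summable fun m => g m x := by
    intro x
    obtain ⟨N, hN⟩ := hexists x
    apply summable_of_ne_finset_zero (s := Finset.range N)
    intro m hm
    exact hgzero hN m (by simpa using hm)
  set δ : X → ℝ := fun x => ∑' m, g m x with hδ
  have htsum_eq : ∀ {N : ℕ} {x : X}, x ∈ K N →
      δ x = ∑ m ∈ Finset.range N, g m x := by
    intro N x hx
    apply tsum_eq_sum
    intro m hm
    exact hgzero hx m (by simpa using hm)
  refine ⟨δ, ?_, ?_, ?_⟩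
  · -- continuity
    rw [continuous_iff_continuousAt]
    intro x
    obtain ⟨N, hN⟩ := hexists x
    have hopen : IsOpen (interior (K (N + 1))) := isOpen_interior
    have hxmem : x ∈ interior (K (N + 1)) := hsub N hN
    have : ContinuousAt (fun y => ∑ m ∈ Finset.range (N + 1), g m y) x := by
      apply Continuous.continuousAt
      exact continuous_finset_sum _ fun m _ => (continuous_const.mul (f m).continuous)
    refine this.congr ?_
    filter_upwards [hopen.mem_nhds hxmem] with y hy
    exact (htsum_eq (interior_subset hy)).symm
  · intro x
    exact tsum_nonneg fun m => hg_nonneg m x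
  · intro n x hx y hy
    have hδx : δ x = ∑ m ∈ Finset.range n, g m x := htsum_eq hx
    have hδx_le : δ x ≤ ∑ m ∈ Finset.range n, ((m : ℝ) + 1) := by
      rw [hδx]
      apply Finset.sum_le_sum
      intro m _
      calc g m x ≤ ((m : ℝ) + 1) * 1 :=
            mul_le_mul_of_nonneg_left (hf01 m x).2 (by positivity)
        _ = (m : ℝ) + 1 := mul_one _
    have hδy_ge : ∑ m ∈ Finset.range (n + 1), ((m : ℝ) + 1) ≤ δ y := by
      have h1 : ∀ m ∈ Finset.range (n + 1), ((m : ℝ) + 1) = g m y := by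
        intro m hm
        have hmn : m ≤ n := Nat.lt_succ_iff.mp (Finset.mem_range.mp hm)
        have : y ∈ (interior (K (m + 1)))ᶜ := by
          intro hmem
          exact hy (hmono (by omega) (interior_subset hmem))
        simp [hg, hf1 m this]
      rw [Finset.sum_congr rfl h1]
      exact Summable.sum_le_tsum _ (fun m _ => hg_nonneg m y) (hsummable y)
    have : ∑ m ∈ Finset.range (n + 1), ((m : ℝ) + 1)
        = (∑ m ∈ Finset.range n, ((m : ℝ) + 1)) + ((n : ℝ) + 1) := by
      rw [Finset.sum_range_succ]
    push_cast
    linarith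
end

section
/- Let f : [0,∞) → [1,∞) be increasing and continuous and F(s) = ∫₀^s f(t) dt. Let c : X → [0,∞) be any function on a set X, ρ a metric on X with ρ(x,y) ≥ |c(x) − c(y)|, and define ρ'(x,y) = f(max{c(x), c(y)}) · ρ(x,y). Then for all x, y ∈ X and any finite chain x = z_0, z_1, …, z_l = y, we have ρ'(z_0,z_1) + ⋯ + ρ'(z_{l-1},z_l) ≥ |F(c(x)) − F(c(y))|. -/
lemma key_step (f : ℝ → ℝ)
    (hfmono : MonotoneOn f (Set.Ici 0)) (hfcont : ContinuousOn f (Set.Ici 0))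
    (hf1 : ∀ t ≥ (0 : ℝ), 1 ≤ f t)
    (F : ℝ → ℝ) (hF : ∀ s, F s = ∫ t in (0 : ℝ)..s, f t)
    {a b : ℝ} (ha : 0 ≤ a) (hb : 0 ≤ b) (hab : a ≤ b) :
    |F a - F b| ≤ f (max a b) * (b - a) := by
  rw [max_eq_right hab]
  have hint : IntervalIntegrable f MeasureTheory.volume a b := by
    apply ContinuousOn.intervalIntegrable
    apply hfcont.mono
    rw [Set.uIcc_of_le hab]
    exact fun t ht => le_trans ha ht.1
  have hFba : F b - F a = ∫ t in a..b, f t := by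
    rw [hF, hF]
    rw [← intervalIntegral.integral_add_adjacent_intervals
      (ContinuousOn.intervalIntegrable (hfcont.mono (by
        rw [Set.uIcc_of_le ha]; exact fun t ht => ht.1))) hint]
    ring
  have hnn : 0 ≤ ∫ t in a..b, f t := by
    apply intervalIntegral.integral_nonneg hab
    intro u hu
    exact le_trans zero_le_one (hf1 u (le_trans ha hu.1))
  have hub : (∫ t in a..b, f t) ≤ f b * (b - a) := by
    have := intervalIntegral.integral_mono_on hab hint
      (intervalIntegrable_const (c := f b)) (fun u hu => hfmono (le_trans ha hu.1) hb hu.2)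
    simpa [mul_comm] using this
  rw [abs_sub_comm, hFba, abs_of_nonneg hnn]
  exact hub

/-- Let `f : [0, ∞) → [1, ∞)` be increasing and continuous, `F s = ∫₀^s f`. Let `c : X → [0, ∞)`
be a function on a set `X` and `ρ` a metric on `X` with `ρ x y ≥ |c x - c y|`. Define
`ρ' x y = f (max (c x) (c y)) * ρ x y`. Then for all `x, y ∈ X` and every finite chain
`x = z 0, z 1, …, z l = y` (`l ≥ 1`), the chain sum of `ρ'` is at least `|F (c x) - F (c y)|`. -/
theorem stmt9 {X : Type*} (f : ℝ → ℝ)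
    (hfmono : MonotoneOn f (Set.Ici 0)) (hfcont : ContinuousOn f (Set.Ici 0))
    (hf1 : ∀ t ≥ (0 : ℝ), 1 ≤ f t)
    (c : X → ℝ) (hc : ∀ x, 0 ≤ c x)
    (ρ : X → X → ℝ)
    (hρ0 : ∀ x, ρ x x = 0) (hρsymm : ∀ x y, ρ x y = ρ y x)
    (hρtri : ∀ x y z, ρ x z ≤ ρ x y + ρ y z)
    (hρc : ∀ x y, |c x - c y| ≤ ρ x y)
    (F : ℝ → ℝ) (hF : ∀ s, F s = ∫ t in (0 : ℝ)..s, f t)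
    (x y : X) (l : ℕ) (hl : 1 ≤ l) (z : ℕ → X) (hz0 : z 0 = x) (hzl : z l = y) :
    |F (c x) - F (c y)| ≤
      ∑ i ∈ Finset.range l, f (max (c (z i)) (c (z (i + 1)))) * ρ (z i) (z (i + 1)) := by
  have key : ∀ a b : X, |F (c a) - F (c b)| ≤ f (max (c a) (c b)) * ρ a b := by
    intro a b
    have hρnn : 0 ≤ ρ a b := le_trans (abs_nonneg _) (hρc a b)
    rcases le_total (c a) (c b) with h | h
    · calc |F (c a) - F (c b)| ≤ f (max (c a) (c b)) * (c b - c a) :=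
            key_step f hfmono hfcont hf1 F hF (hc a) (hc b) h
        _ ≤ f (max (c a) (c b)) * ρ a b := by
            apply mul_le_mul_of_nonneg_left _
              (le_trans zero_le_one (hf1 _ (le_trans (hc a) (le_max_left _ _))))
            calc c b - c a ≤ |c a - c b| := by rw [abs_sub_comm]; exact le_abs_self _
              _ ≤ ρ a b := hρc a b
    · rw [max_comm, abs_sub_comm]
      calc |F (c b) - F (c a)| ≤ f (max (c b) (c a)) * (c a - c b) :=
            key_step f hfmono hfcont hf1 F hF (hc b) (hc a) h
        _ ≤ f (max (c b) (c a)) * ρ a b := by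
            apply mul_le_mul_of_nonneg_left _
              (le_trans zero_le_one (hf1 _ (le_trans (hc b) (le_max_left _ _))))
            calc c a - c b ≤ |c a - c b| := le_abs_self _
              _ ≤ ρ a b := hρc a b
  subst hz0 hzl
  calc |F (c (z 0)) - F (c (z l))|
      = |∑ i ∈ Finset.range l, (F (c (z i)) - F (c (z (i + 1))))| := by
        rw [Finset.sum_range_sub' (fun i => F (c (z i)))]
    _ ≤ ∑ i ∈ Finset.range l, |F (c (z i)) - F (c (z (i + 1)))| :=
        Finset.abs_sum_le_sum_abs _ _
    _ ≤ ∑ i ∈ Finset.range l, f (max (c (z i)) (c (z (i + 1)))) * ρ (z i) (z (i + 1)) :=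
        Finset.sum_le_sum fun i _ => key _ _
end
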